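/- arXiv:2605.07991 — 6 statements merged into one kernel-verified Lean document; each statement's English description precedes it below -/
import Mathlib

section
/- A map v : K → ℝ≥0 from a field K is a non-Archimedean valuation (i.e., v(0)=0, v(1)=1, v(xy)=v(x)v(y), and v(x+y) ≤ max(v(x), v(y)) with equality when v(x) ≠ v(y)) if and only if the induced map of multiplicative monoids is a band morphism from the bandification of K to the tropical band 𝕋, i.e., it is multiplicative, preserves 0 and 1, and sends every finite family (xᵢ) in K with Σ xᵢ = 0 to a family (v(xᵢ)) whose maximum is attained at least twice (or all values are 0). -/
/-- The null set of the tropical band `𝕋` (in the ambient semiring, where the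
monoid zero is identified with the empty sum): a multiset over `ℝ≥0` is a
null-sum iff all of its entries are `0`, or its (positive) maximum occurs at
least twice. -/
def TropNull (s : Multiset NNReal) : Prop :=
  (∀ x ∈ s, x = 0) ∨ ∃ m ∈ s, 0 < m ∧ (∀ x ∈ s, x ≤ m) ∧ 2 ≤ s.count m

private lemma my_sup_mem {s : Multiset NNReal} (h : s ≠ 0) : s.sup ∈ s := by
  induction s using Multiset.induction_on with
  | empty => exact absurd rfl h
  | cons a t ih =>
    rw [Multiset.sup_cons]
    rcases eq_or_ne t 0 with rfl | ht
    · simp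
    · rcases max_choice a t.sup with h1 | h1 <;> rw [h1]
      · exact Multiset.mem_cons_self _ _
      · exact Multiset.mem_cons_of_mem (ih ht)

private lemma my_sum_le {K : Type*} [Field K] (v : K → NNReal)
    (h0 : v 0 = 0) (hle : ∀ x y, v (x + y) ≤ max (v x) (v y)) :
    ∀ s : Multiset K, v s.sum ≤ (s.map v).sup := by
  intro s
  induction s using Multiset.induction_on with
  | empty => simp [h0]
  | cons a t ih =>
    rw [Multiset.sum_cons, Multiset.map_cons, Multiset.sup_cons]
    exact le_trans (hle a t.sum) (max_le_max le_rfl ih)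

/-- A map `v : K → ℝ≥0` from a field is a non-Archimedean valuation iff it is
a band morphism from the bandification of `K` to the tropical band `𝕋`. -/
theorem valuation_iff_band_morphism_to_tropical
    {K : Type*} [Field K] (v : K → NNReal) :
    (v 0 = 0 ∧ v 1 = 1 ∧ (∀ x y, v (x * y) = v x * v y) ∧
      (∀ x y, v (x + y) ≤ max (v x) (v y)) ∧
      (∀ x y, v x ≠ v y → v (x + y) = max (v x) (v y))) ↔
    (v 0 = 0 ∧ v 1 = 1 ∧ (∀ x y, v (x * y) = v x * v y) ∧
      ∀ s : Multiset K, s.sum = 0 → TropNull (s.map v)) := by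
  constructor
  · rintro ⟨h0, h1, hm, hle, heq⟩
    refine ⟨h0, h1, hm, fun s hs => ?_⟩
    by_cases hall : ∀ x ∈ s.map v, x = 0
    · exact Or.inl hall
    · -- the sup is positive
      have hs0 : s ≠ 0 := by rintro rfl; exact hall (by simp)
      set m := (s.map v).sup with hmdef
      have hmem : m ∈ s.map v := my_sup_mem (by simpa using hs0)
      have hub : ∀ x ∈ s.map v, x ≤ m := fun x hx => Multiset.le_sup hx
      have hmpos : 0 < m := by
        push_neg at hall
        obtain ⟨x, hx, hx0⟩ := hall
        exact lt_of_lt_of_le (pos_iff_ne_zero.mpr hx0) (hub x hx)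
      refine Or.inr ⟨m, hmem, hmpos, hub, ?_⟩
      by_contra hcount
      push_neg at hcount
      interval_cases h : (s.map v).count m
      · exact absurd ((Multiset.count_eq_zero).mp h) (by simpa using hmem)
      · -- count = 1 : extract the unique element attaining the max
        obtain ⟨a, ha, hva⟩ := Multiset.mem_map.mp hmem
        obtain ⟨t, rfl⟩ := Multiset.exists_cons_of_mem ha
        rw [Multiset.map_cons] at h
        have h' : Multiset.count m (t.map v) = 0 := by
          rw [← hva] at h ⊢
          rw [Multiset.count_cons_self] at h
          omega
        have hnt : m ∉ t.map v := Multiset.count_eq_zero.mp h'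
        have hlt : (t.map v).sup < m := by
          rcases eq_or_ne (t.map v) 0 with h0' | h0'
          · rw [h0']; simpa using hmpos
          · refine lt_of_le_of_ne ?_ ?_
            · exact Multiset.sup_le.mpr fun b hb =>
                hub b (by rw [Multiset.map_cons]; exact Multiset.mem_cons_of_mem hb)
            · intro hc; exact hnt (hc ▸ my_sup_mem h0')
        have hvt : v t.sum < m := lt_of_le_of_lt (my_sum_le v h0 hle t) hlt
        have : v ((a ::ₘ t).sum) = max (v a) (v t.sum) := by
          rw [Multiset.sum_cons]
          exact heq a t.sum (by rw [hva]; exact ne_of_gt hvt)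
        rw [hs, h0] at this
        have hcon : m ≤ 0 := by
          calc m = v a := hva.symm
          _ ≤ max (v a) (v t.sum) := le_max_left _ _
          _ = 0 := this.symm
        exact absurd hmpos (not_lt.mpr hcon)
  · rintro ⟨h0, h1, hm, hnull⟩
    -- v (-z) = v z
    have hneg1 : v (-1) = 1 := by
      have h2 : v (-1) * v (-1) = 1 := by
        rw [← hm]; norm_num [h1]
      have h2' : (v (-1) : ℝ) * (v (-1) : ℝ) = 1 := by exact_mod_cast h2
      have h3 : (v (-1) : ℝ) = 1 := by nlinarith [(v (-1)).coe_nonneg]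
      exact NNReal.coe_injective (by simpa using h3)
    have hneg : ∀ z : K, v (-z) = v z := by
      intro z
      calc v (-z) = v ((-1) * z) := by ring_nf
      _ = v (-1) * v z := hm _ _
      _ = v z := by rw [hneg1, one_mul]
    -- key: apply hnull to {x, y, -(x+y)}
    have key : ∀ x y : K, TropNull (v x ::ₘ v y ::ₘ {v (x + y)}) := by
      intro x y
      have hsum : (x ::ₘ y ::ₘ {-(x + y)} : Multiset K).sum = 0 := by
        simp only [Multiset.sum_cons, Multiset.sum_singleton]; ring
      have := hnull _ hsum
      rwa [Multiset.map_cons, Multiset.map_cons, Multiset.map_singleton, hneg] at this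
    have hineq : ∀ x y : K, v (x + y) ≤ max (v x) (v y) := by
      intro x y
      by_contra hc
      push_neg at hc
      rcases key x y with hall | ⟨m, hmem, hmpos, hub, hcount⟩
      · have := hall (v (x + y)) (by simp)
        simp [this] at hc
      · have hx : v x < v (x + y) := lt_of_le_of_lt (le_max_left _ _) hc
        have hy : v y < v (x + y) := lt_of_le_of_lt (le_max_right _ _) hc
        have hmeq : m = v (x + y) := by
          simp only [Multiset.mem_cons, Multiset.mem_singleton] at hmem
          rcases hmem with h | h | h
          · exact absurd (hub _ (by simp)) (not_le.mpr (h ▸ hx))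
          · exact absurd (hub _ (by simp)) (not_le.mpr (h ▸ hy))
          · exact h
        rw [hmeq] at hcount
        have hcx : v x ≠ v (x + y) := ne_of_lt hx
        have hcy : v y ≠ v (x + y) := ne_of_lt hy
        rw [Multiset.count_cons_of_ne (Ne.symm hcx), Multiset.count_cons_of_ne (Ne.symm hcy),
          Multiset.count_singleton_self] at hcount
        omega
    refine ⟨h0, h1, hm, hineq, ?_⟩
    intro x y hxy
    -- show equality when v x ≠ v y
    rcases lt_or_gt_of_ne hxy with hlt | hlt
    · -- v x < v y, show v (x+y) = v y
      rw [max_eq_right hlt.le]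
      refine le_antisymm (le_trans (hineq x y) (by simp [hlt.le])) ?_
      by_contra hc
      push_neg at hc
      rcases key x y with hall | ⟨m, hmem, hmpos, hub, hcount⟩
      · have := hall (v y) (by simp)
        have hx0 := hall (v x) (by simp)
        exact hxy (hx0.trans this.symm)
      · have hmeq : m = v y := by
          simp only [Multiset.mem_cons, Multiset.mem_singleton] at hmem
          have hyle : v y ≤ m := hub _ (by simp)
          rcases hmem with h | h | h
          · exact absurd hyle (not_le.mpr (h ▸ hlt))
          · exact h
          · exact absurd hyle (not_le.mpr (h ▸ hc))
        rw [hmeq] at hcount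
        have hcz : v (x + y) ≠ v y := ne_of_lt hc
        rw [Multiset.count_cons_of_ne hxy.symm, Multiset.count_cons_self,
          Multiset.count_singleton, if_neg (Ne.symm hcz)] at hcount
        omega
    · -- v y < v x, show v (x+y) = v x
      rw [max_eq_left hlt.le]
      refine le_antisymm (le_trans (hineq x y) (by simp [hlt.le])) ?_
      by_contra hc
      push_neg at hc
      rcases key x y with hall | ⟨m, hmem, hmpos, hub, hcount⟩
      · have := hall (v y) (by simp)
        have hx0 := hall (v x) (by simp)
        exact hxy (hx0.trans this.symm)
      · have hmeq : m = v x := by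
          simp only [Multiset.mem_cons, Multiset.mem_singleton] at hmem
          have hxle : v x ≤ m := hub _ (by simp)
          rcases hmem with h | h | h
          · exact h
          · exact absurd hxle (not_le.mpr (h ▸ hlt))
          · exact absurd hxle (not_le.mpr (h ▸ hc))
        rw [hmeq] at hcount
        have hcz : v (x + y) ≠ v x := ne_of_lt hc
        rw [Multiset.count_cons_self, Multiset.count_cons_of_ne hxy,
          Multiset.count_singleton, if_neg (Ne.symm hcz)] at hcount
        omega
end

section
/- A map σ : K → {0, 1, -1} from a field K is induced by a field ordering (i.e., σ is the sign map of a linear order making K an ordered field) if and only if σ is a band morphism from the bandification of K to the sign band 𝕊: multiplicative, σ(0)=0, σ(1)=1, and whenever a finite family (xᵢ) in K sums to 0 and not all σ(xᵢ) are 0, then both values 1 and -1 occur among the σ(xᵢ). -/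
/-- A map `σ : K → {0,1,-1} ⊆ ℤ` from a field is the sign map of a field
ordering iff it is a band morphism from the bandification of `K` to the sign
band `𝕊`. -/
theorem ordering_iff_band_morphism_to_sign
    {K : Type*} [Field K] (σ : K → ℤ) :
    (∃ le : K → K → Prop,
      (∀ a, le a a) ∧
      (∀ a b c, le a b → le b c → le a c) ∧
      (∀ a b, le a b → le b a → a = b) ∧
      (∀ a b, le a b ∨ le b a) ∧
      (∀ a b c, le a b → le (a + c) (b + c)) ∧
      (∀ a b, le 0 a → le 0 b → le 0 (a * b)) ∧
      σ 0 = 0 ∧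
      (∀ x, x ≠ 0 → (σ x = 1 ↔ le 0 x)) ∧
      (∀ x, x ≠ 0 → (σ x = -1 ↔ ¬ le 0 x))) ↔
    (σ 0 = 0 ∧ σ 1 = 1 ∧ (∀ x y, σ (x * y) = σ x * σ y) ∧
      (∀ x, σ x = 0 ∨ σ x = 1 ∨ σ x = -1) ∧
      ∀ s : Multiset K, s.sum = 0 →
        ((∀ x ∈ s, σ x = 0) ∨ ((1 : ℤ) ∈ s.map σ ∧ (-1 : ℤ) ∈ s.map σ))) := by
  constructor
  · rintro ⟨le, hrefl, htrans, hanti, htotal, haddc, hmulpos, h0, h1, hm1⟩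
    -- basic consequences of the order axioms
    have hneg : ∀ a : K, le a 0 → le 0 (-a) := by
      intro a h
      have := haddc a 0 (-a) h
      simpa using this
    have hneg' : ∀ a : K, le 0 a → le (-a) 0 := by
      intro a h
      have := haddc 0 a (-a) h
      simpa using this
    have hle01 : le 0 (1 : K) := by
      by_contra h
      have h10 : le (1 : K) 0 := (htotal 0 1).resolve_left h
      have : le 0 ((-1 : K) * (-1)) := hmulpos _ _ (hneg 1 h10) (hneg 1 h10)
      rw [neg_mul_neg, one_mul] at this
      exact h this
    have hσ1 : σ 1 = 1 := (h1 1 one_ne_zero).2 hle01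
    -- trichotomy
    have htri : ∀ x : K, σ x = 0 ∨ σ x = 1 ∨ σ x = -1 := by
      intro x
      by_cases hx : x = 0
      · left; rw [hx, h0]
      · right
        by_cases hle : le 0 x
        · left; exact (h1 x hx).2 hle
        · right; exact (hm1 x hx).2 hle
    -- sign values for nonzero elements
    have hpos : ∀ x : K, x ≠ 0 → le 0 x → σ x = 1 := fun x hx h => (h1 x hx).2 h
    have hnegσ : ∀ x : K, x ≠ 0 → ¬ le 0 x → σ x = -1 := fun x hx h => (hm1 x hx).2 h
    -- nonneg · nonpos
    have hmixed : ∀ x y : K, x ≠ 0 → y ≠ 0 → le 0 x → ¬ le 0 y → ¬ le 0 (x * y) := by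
      intro x y hx hy hlx hly hxy
      have hy0 : le y 0 := (htotal 0 y).resolve_left hly
      have h1' : le 0 (x * -y) := hmulpos _ _ hlx (hneg y hy0)
      rw [mul_neg] at h1'
      have h2' : le (x * y) 0 := by
        have := haddc 0 (-(x * y)) (x * y) h1'
        simpa using this
      have : (0 : K) = x * y := hanti _ _ hxy h2'
      exact (mul_ne_zero hx hy) this.symm
    -- multiplicativity
    have hmul : ∀ x y : K, σ (x * y) = σ x * σ y := by
      intro x y
      by_cases hx : x = 0
      · rw [hx, zero_mul, h0, zero_mul]
      by_cases hy : y = 0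
      · rw [hy, mul_zero, h0, mul_zero]
      have hxy : x * y ≠ 0 := mul_ne_zero hx hy
      by_cases hlx : le 0 x <;> by_cases hly : le 0 y
      · rw [hpos _ hx hlx, hpos _ hy hly, hpos _ hxy (hmulpos _ _ hlx hly), one_mul]
      · rw [hpos _ hx hlx, hnegσ _ hy hly, hnegσ _ hxy (hmixed x y hx hy hlx hly), one_mul]
      · rw [hnegσ _ hx hlx, hpos _ hy hly, mul_one]
        apply hnegσ _ hxy
        rw [mul_comm]
        exact hmixed y x hy hx hly hlx
      · rw [hnegσ _ hx hlx, hnegσ _ hy hly]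
        have hx0 : le x 0 := (htotal 0 x).resolve_left hlx
        have hy0 : le y 0 := (htotal 0 y).resolve_left hly
        have : le 0 ((-x) * (-y)) := hmulpos _ _ (hneg x hx0) (hneg y hy0)
        rw [neg_mul_neg] at this
        rw [hpos _ hxy this]; ring
    refine ⟨h0, hσ1, hmul, htri, ?_⟩
    -- sums of nonnegatives
    have hadd' : ∀ a b : K, le 0 a → le 0 b → le 0 (a + b) := by
      intro a b ha hb
      have h1' : le b (a + b) := by have := haddc 0 a b ha; simpa [add_comm] using this
      exact htrans _ _ _ hb h1'
    have hsumnn : ∀ s : Multiset K, (∀ y ∈ s, le 0 y) → le 0 s.sum := by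
      intro s
      induction s using Multiset.induction with
      | empty => intro _; simpa using hrefl (0 : K)
      | cons a t ih =>
        intro h
        rw [Multiset.sum_cons]
        exact hadd' _ _ (h a (Multiset.mem_cons_self a t))
          (ih fun y hy => h y (Multiset.mem_cons_of_mem hy))
    have hallzero : ∀ s : Multiset K, (∀ y ∈ s, le 0 y) → s.sum = 0 → ∀ y ∈ s, y = 0 := by
      intro s hs hsum y hy
      obtain ⟨t, rfl⟩ := Multiset.exists_cons_of_mem hy
      rw [Multiset.sum_cons] at hsum
      have hts : le 0 t.sum := hsumnn t fun z hz => hs z (Multiset.mem_cons_of_mem hz)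
      have hy0 : le 0 y := hs y (Multiset.mem_cons_self y t)
      have h1' : le t.sum (y + t.sum) := by
        have := haddc 0 y t.sum hy0; simpa [add_comm] using this
      rw [hsum] at h1'
      have : t.sum = 0 := (hanti _ _ hts h1').symm
      rw [this, add_zero] at hsum
      exact hsum
    intro s hsum
    by_cases hall : ∀ x ∈ s, σ x = 0
    · exact Or.inl hall
    · right
      push_neg at hall
      obtain ⟨x, hxs, hxσ⟩ := hall
      have hx0 : x ≠ 0 := fun h => hxσ (h ▸ h0)
      constructor
      · -- 1 ∈ map: otherwise everything is ≤ 0, use negatives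
        by_contra hn1
        have hne : ∀ y ∈ s, le 0 (-y) := by
          intro y hy
          by_cases hy0 : y = 0
          · rw [hy0, neg_zero]; exact hrefl 0
          by_cases hly : le 0 y
          · exact absurd (hpos y hy0 hly ▸ Multiset.mem_map_of_mem σ hy) hn1
          · exact hneg y ((htotal 0 y).resolve_left hly)
        have hmapsum : (s.map (fun y => -y)).sum = 0 := by
          rw [Multiset.sum_map_neg', hsum, neg_zero]
        have := hallzero (s.map (fun y => -y))
          (by intro z hz; obtain ⟨y, hy, rfl⟩ := Multiset.mem_map.mp hz; exact hne y hy)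
          hmapsum (-x) (Multiset.mem_map_of_mem _ hxs)
        exact hx0 (by simpa using this)
      · by_contra hn1
        have hne : ∀ y ∈ s, le 0 y := by
          intro y hy
          by_cases hy0 : y = 0
          · rw [hy0]; exact hrefl 0
          by_cases hly : le 0 y
          · exact hly
          · exact absurd (hnegσ y hy0 hly ▸ Multiset.mem_map_of_mem σ hy) hn1
        exact hx0 (hallzero s hne hsum x hxs)
  · rintro ⟨h0, h1, hmul, htri, hsum⟩
    -- σ(-1) = -1
    have hσm1 : σ (-1 : K) = -1 := by
      have hs : ({1, -1} : Multiset K).sum = 0 := by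
        rw [Multiset.insert_eq_cons, Multiset.sum_cons, Multiset.sum_singleton]; ring
      rcases hsum _ hs with h | ⟨_, h⟩
      · exact absurd (h 1 (by rw [Multiset.insert_eq_cons]; exact Multiset.mem_cons_self _ _)) (by rw [h1]; norm_num)
      · simp only [Multiset.insert_eq_cons, Multiset.map_cons, Multiset.map_singleton, Multiset.mem_cons,
          Multiset.mem_singleton, h1] at h
        rcases h with h | h
        · norm_num at h
        · exact h.symm
    have hσneg : ∀ x : K, σ (-x) = -σ x := by
      intro x
      rw [show (-x : K) = -1 * x by ring, hmul, hσm1, neg_one_mul]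
    have hnz : ∀ x : K, x ≠ 0 → σ x ≠ 0 := by
      intro x hx h
      have : σ (x * x⁻¹) = 0 := by rw [hmul, h, zero_mul]
      rw [mul_inv_cancel₀ hx, h1] at this
      norm_num at this
    have hz : ∀ x : K, σ x = 0 → x = 0 := by
      intro x h
      by_contra hx
      exact hnz x hx h
    -- key closure: sums of non-negatives are non-negative
    have hclose : ∀ x y : K, σ x ≠ -1 → σ y ≠ -1 → σ (x + y) ≠ -1 := by
      intro x y hx hy hxy
      have hs : ({x, y, -(x + y)} : Multiset K).sum = 0 := by
        rw [Multiset.insert_eq_cons, Multiset.insert_eq_cons, Multiset.sum_cons,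
          Multiset.sum_cons, Multiset.sum_singleton]; ring
      rcases hsum _ hs with h | ⟨_, h⟩
      · have := h (-(x + y)) (by simp [Multiset.insert_eq_cons])
        rw [hσneg, hxy] at this
        norm_num at this
      · simp only [Multiset.insert_eq_cons, Multiset.map_cons, Multiset.map_singleton, Multiset.mem_cons,
          Multiset.mem_singleton, hσneg, hxy] at h
        rcases h with h | h | h
        · exact hx h.symm
        · exact hy h.symm
        · norm_num at h
    refine ⟨fun a b => σ (b - a) ≠ -1, ?_, ?_, ?_, ?_, ?_, ?_, h0, ?_, ?_⟩
    · intro a; show σ (a - a) ≠ -1; rw [sub_self, h0]; norm_num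
    · intro a b c hab hbc
      show σ (c - a) ≠ -1
      have := hclose _ _ hbc hab
      rwa [sub_add_sub_cancel] at this
    · intro a b hab hba
      replace hab : σ (b - a) ≠ -1 := hab
      replace hba : σ (a - b) ≠ -1 := hba
      rw [show a - b = -(b - a) by ring, hσneg] at hba
      have hba' : σ (b - a) ≠ 1 := fun h => hba (by rw [h])
      rcases htri (b - a) with h | h | h
      · have := hz _ h
        rw [sub_eq_zero] at this
        exact this.symm
      · exact absurd h hba'
      · exact absurd h hab
    · intro a b
      by_cases h : σ (b - a) = -1
      · right
        show σ (a - b) ≠ -1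
        rw [show a - b = -(b - a) by ring, hσneg, h]
        norm_num
      · exact Or.inl h
    · intro a b c hab
      show σ (b + c - (a + c)) ≠ -1
      rwa [show b + c - (a + c) = b - a by ring]
    · intro a b ha hb
      replace ha : σ (a - 0) ≠ -1 := ha
      replace hb : σ (b - 0) ≠ -1 := hb
      rw [sub_zero] at ha hb
      show σ (a * b - 0) ≠ -1
      rw [sub_zero, hmul]
      rcases htri a with h | h | h
      · rw [h, zero_mul]; norm_num
      · rcases htri b with h' | h' | h'
        · rw [h, h']; norm_num
        · rw [h, h']; norm_num
        · exact absurd h' hb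
      · exact absurd h ha
    · intro x hx
      show σ x = 1 ↔ σ (x - 0) ≠ -1
      rw [sub_zero]
      rcases (htri x).resolve_left (hnz x hx) with h | h
      · rw [h]; norm_num
      · rw [h]; norm_num
    · intro x hx
      show σ x = -1 ↔ ¬ σ (x - 0) ≠ -1
      rw [sub_zero]
      rcases (htri x).resolve_left (hnz x hx) with h | h
      · rw [h]; norm_num
      · rw [h]; norm_num
end

section
/- Let k be a linearly ordered field with a compatible non-Archimedean absolute value |·| : k → ℝ≥0 (multiplicative, |x+y| ≤ max(|x|,|y|), and 0 ≤ a ≤ b implies |a| ≤ |b|). Then the signed valuation v±(x) = sgn(x)·|x| is a band morphism from the bandification of k to the real tropical band ℝ𝕋: it is multiplicative, preserves 0 and 1, and whenever Σ xᵢ = 0 in k, the family (v±(xᵢ)) lies in N_ℝ𝕋, i.e., either all values are 0 or max|v±(xᵢ)| is attained with both signs. -/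
/-- The null set of the real tropical band `ℝ𝕋`: all entries `0`, or the
maximum of the absolute values is attained with both signs. -/
def RealTropNull (s : Multiset ℝ) : Prop :=
  (∀ x ∈ s, x = 0) ∨
    ∃ m : ℝ, 0 < m ∧ m ∈ s ∧ -m ∈ s ∧ ∀ x ∈ s, |x| ≤ m

/-!
Write `P` for the sum of the positive parts of a family summing to zero; it is also the sum of
the negative parts. By monotonicity every `v x` is at most `v P`, and by the ultrametric inequality
`v P` is attained both by some positive part and by some negative part. Since `v P` is nonzero as
soon as some `x` is, these give entries of both signs with `|v± x| = v P`.
-/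

open Set

section PosNegPart

variable {α R : Type*} [AddCommGroup α] [LinearOrder α] [LinearOrder R] {v : α → R}

lemma map_neg_map_posPart (s : Multiset α) : (s.map Neg.neg).map (·⁺) = s.map (·⁻) := by
  simp only [Multiset.map_map, Function.comp_def, posPart_neg]

variable [IsOrderedAddMonoid α]

lemma le_apply_sum_map_posPart (hv : MonotoneOn v (Ici 0)) {s : Multiset α} {x : α}
    (hx : x ∈ s) : v x⁺ ≤ v (s.map (·⁺)).sum := by
  have hnonneg : ∀ y ∈ s.map (·⁺), 0 ≤ y := Multiset.forall_mem_map_iff.2 fun y _ ↦ posPart_nonneg y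
  exact hv (posPart_nonneg x) (Multiset.sum_nonneg hnonneg)
    (Multiset.single_le_sum hnonneg _ (Multiset.mem_map_of_mem _ hx))

lemma exists_apply_posPart_eq_apply_sum (hna : IsNonarchimedean v) (hv : MonotoneOn v (Ici 0))
    {s : Multiset α} (hs : s ≠ 0) : ∃ x ∈ s, v x⁺ = v (s.map (·⁺)).sum := by
  obtain ⟨x, hx, hle⟩ := hna.multiset_image_add_of_nonempty (·⁺) hs
  exact ⟨x, hx, (le_apply_sum_map_posPart hv hx).antisymm hle⟩

lemma le_apply_sum_map_negPart (hv : MonotoneOn v (Ici 0)) {s : Multiset α} {x : α}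
    (hx : x ∈ s) : v x⁻ ≤ v (s.map (·⁻)).sum := by
  simpa only [posPart_neg, map_neg_map_posPart] using
    le_apply_sum_map_posPart hv (Multiset.mem_map_of_mem Neg.neg hx)

lemma exists_apply_negPart_eq_apply_sum (hna : IsNonarchimedean v) (hv : MonotoneOn v (Ici 0))
    {s : Multiset α} (hs : s ≠ 0) : ∃ x ∈ s, v x⁻ = v (s.map (·⁻)).sum := by
  obtain ⟨y, hy, hvy⟩ :=
    exists_apply_posPart_eq_apply_sum hna hv (s := s.map Neg.neg) (by simpa using hs)
  obtain ⟨x, hx, rfl⟩ := Multiset.mem_map.1 hy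
  exact ⟨x, hx, by rwa [posPart_neg, map_neg_map_posPart] at hvy⟩

lemma sum_map_posPart_eq_sum_map_negPart {s : Multiset α} (hs : s.sum = 0) :
    (s.map (·⁺)).sum = (s.map (·⁻)).sum := by
  rw [← sub_eq_zero, ← Multiset.sum_map_sub]
  simpa only [posPart_sub_negPart, Multiset.map_id'] using hs

end PosNegPart

theorem exists_pos_neg_apply_eq_max_of_sum_eq_zero {α : Type*} [AddCommGroup α] [LinearOrder α]
    [IsOrderedAddMonoid α] {v : α → NNReal} (hna : IsNonarchimedean v)
    (hv : MonotoneOn v (Ici 0)) (hneg : ∀ x, v (-x) = v x) (hv0 : ∀ x, v x = 0 ↔ x = 0)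
    {s : Multiset α} (hs : s.sum = 0) {x₀ : α} (hx₀ : x₀ ∈ s) (hx₀0 : x₀ ≠ 0) :
    ∃ m, 0 < m ∧ (∃ x ∈ s, 0 < x ∧ v x = m) ∧ (∃ x ∈ s, x < 0 ∧ v x = m) ∧ ∀ x ∈ s, v x ≤ m := by
  set P := (s.map (·⁺)).sum
  have hP : (s.map (·⁻)).sum = P := (sum_map_posPart_eq_sum_map_negPart hs).symm
  have hle : ∀ x ∈ s, v x ≤ v P := by
    intro x hx
    rcases le_total 0 x with h | h
    · simpa only [posPart_eq_self.2 h] using le_apply_sum_map_posPart hv hx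
    · simpa only [negPart_eq_neg.2 h, hneg, hP] using le_apply_sum_map_negPart hv hx
  have hvP : v P ≠ 0 := fun h ↦ hx₀0 <| (hv0 x₀).1 <| nonpos_iff_eq_zero.1 (h ▸ hle x₀ hx₀)
  have hs0 : s ≠ 0 := by rintro rfl; exact Multiset.notMem_zero x₀ hx₀
  refine ⟨v P, pos_iff_ne_zero.2 hvP, ?_, ?_, hle⟩
  · obtain ⟨x, hx, hvx⟩ := exists_apply_posPart_eq_apply_sum hna hv hs0
    have hx0 : 0 < x := not_le.1 fun h ↦ hvP <| by rw [← hvx, posPart_eq_zero.2 h, hv0]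
    exact ⟨x, hx, hx0, by rwa [posPart_eq_self.2 hx0.le] at hvx⟩
  · obtain ⟨x, hx, hvx⟩ := exists_apply_negPart_eq_apply_sum hna hv hs0
    rw [hP] at hvx
    have hx0 : x < 0 := not_le.1 fun h ↦ hvP <| by rw [← hvx, negPart_eq_zero.2 h, hv0]
    exact ⟨x, hx, hx0, by rwa [negPart_eq_neg.2 hx0.le, hneg] at hvx⟩

lemma map_neg_eq_of_map_mul {R : Type*} [Ring R] {v : R → NNReal} (hv1 : v 1 = 1)
    (hmul : ∀ x y, v (x * y) = v x * v y) (x : R) : v (-x) = v x := by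
  have hv_neg_one : v (-1) = 1 := (mul_self_inj (by positivity) zero_le_one).1 <| by
    rw [← hmul, neg_mul_neg, one_mul, hv1, one_mul]
  rw [neg_eq_neg_one_mul, hmul, hv_neg_one, one_mul]

lemma abs_sign_mul_le {α : Type*} [Zero α] [Preorder α] [DecidableLT α] (x : α) (r : NNReal) :
    |(SignType.sign x : ℝ) * r| ≤ r := by
  rw [abs_mul, NNReal.abs_eq]
  exact mul_le_of_le_one_left r.coe_nonneg (by rcases SignType.sign x with _ | _ | _ <;> simp)

/-- For an ordered field `k` with a compatible non-Archimedean absolute value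
`v`, the signed valuation `x ↦ sgn(x)·|x|` is a band morphism from the
bandification of `k` to the real tropical band `ℝ𝕋`. -/
theorem signed_valuation_is_band_morphism
    {k : Type*} [Field k] [LinearOrder k] [IsStrictOrderedRing k] (v : k → NNReal)
    (hv0 : ∀ x, v x = 0 ↔ x = 0) (hv1 : v 1 = 1)
    (hmul : ∀ x y, v (x * y) = v x * v y)
    (hultra : ∀ x y, v (x + y) ≤ max (v x) (v y))
    (hcompat : ∀ a b : k, 0 ≤ a → a ≤ b → v a ≤ v b) :
    let vpm : k → ℝ := fun x => (SignType.sign x : ℝ) * (v x : ℝ)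
    vpm 0 = 0 ∧ vpm 1 = 1 ∧ (∀ x y, vpm (x * y) = vpm x * vpm y) ∧
      ∀ s : Multiset k, s.sum = 0 → RealTropNull (s.map vpm) := by
  intro vpm
  refine ⟨by simp [vpm], by simp [vpm, hv1], fun x y ↦ ?_, fun s hs ↦ ?_⟩
  · simp only [vpm, hmul, sign_mul, SignType.coe_mul, NNReal.coe_mul]
    ring
  by_cases hall : ∀ x ∈ s, x = 0
  · refine .inl <| Multiset.forall_mem_map_iff.2 fun x hx ↦ ?_
    simp [vpm, hall x hx]
  push Not at hall
  obtain ⟨x₀, hx₀, hx₀0⟩ := hall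
  obtain ⟨m, hm, ⟨xp, hxp, hxp0, rfl⟩, ⟨xn, hxn, hxn0, hvxn⟩, hle⟩ :=
    exists_pos_neg_apply_eq_max_of_sum_eq_zero hultra (fun a ha _ _ hab ↦ hcompat a _ ha hab)
      (map_neg_eq_of_map_mul hv1 hmul) hv0 hs hx₀ hx₀0
  refine .inr ⟨v xp, hm, Multiset.mem_map.2 ⟨xp, hxp, by simp [vpm, hxp0]⟩,
    Multiset.mem_map.2 ⟨xn, hxn, by simp [vpm, hxn0, hvxn]⟩, ?_⟩
  rw [Multiset.forall_mem_map_iff]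
  exact fun x hx ↦ (abs_sign_mul_le x (v x)).trans (NNReal.coe_le_coe.2 (hle x hx))
end

section
/- The prime m-ideals of the bandification of ℤ are exactly the unions of sets of the form pℤ for p prime (including the empty union {0}); in particular they are in bijection with subsets of the set of prime numbers, and the unique maximal m-ideal is ℤ \ {1, -1}. -/
/-- `I` is a prime m-ideal of the pointed multiplicative monoid `(ℤ, ·)`:
it contains `0`, is a proper subset, absorbs multiplication, and its
complement is a multiplicative set containing `1`. -/
def IsPrimeMIdealInt (I : Set ℤ) : Prop :=
  (0 : ℤ) ∈ I ∧ I ≠ Set.univ ∧ (∀ a b : ℤ, b ∈ I → a * b ∈ I) ∧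
    (1 : ℤ) ∉ I ∧ ∀ a b : ℤ, a ∉ I → b ∉ I → a * b ∉ I

lemma neg_one_not_mem {I : Set ℤ} (hI : IsPrimeMIdealInt I) : (-1 : ℤ) ∉ I := by
  obtain ⟨_, _, habs, h1, _⟩ := hI
  intro h
  exact h1 (by simpa using habs (-1) (-1) h)

lemma exists_prime_mem {I : Set ℤ} (hI : IsPrimeMIdealInt I) :
    ∀ n : ℕ, ∀ x : ℤ, x.natAbs = n → x ∈ I → x ≠ 0 →
      ∃ p : ℕ, p.Prime ∧ (p : ℤ) ∈ I ∧ (p : ℤ) ∣ x := by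
  intro n
  induction n using Nat.strong_induction_on with
  | _ n ih =>
    intro x hn hx hx0
    obtain ⟨h0, hne, habs, h1, hcomp⟩ := hI
    have hx1 : x.natAbs ≠ 1 := by
      intro h
      rcases Int.natAbs_eq_iff.mp h with h | h
      · exact h1 (by rw [h] at hx; simpa using hx)
      · exact neg_one_not_mem ⟨h0, hne, habs, h1, hcomp⟩ (by rw [h] at hx; simpa using hx)
    obtain ⟨p, hp, hpd⟩ := Nat.exists_prime_and_dvd hx1
    have hpdx : (p : ℤ) ∣ x := Int.natAbs_dvd_natAbs.mp (by simpa using hpd)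
    obtain ⟨y, hy⟩ := hpdx
    by_cases hpI : (p : ℤ) ∈ I
    · exact ⟨p, hp, hpI, ⟨y, hy⟩⟩
    · have hyI : y ∈ I := by
        by_contra hyI
        exact hcomp _ _ hpI hyI (hy ▸ hx)
      have hy0 : y ≠ 0 := by rintro rfl; simp at hy; exact hx0 hy
      have hlt : y.natAbs < n := by
        subst hn
        rw [hy, Int.natAbs_mul, Int.natAbs_natCast]
        have : 1 < p := hp.one_lt
        have : 0 < y.natAbs := Int.natAbs_pos.mpr hy0
        nlinarith
      obtain ⟨q, hq, hqI, hqd⟩ := ih _ hlt y rfl hyI hy0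
      exact ⟨q, hq, hqI, hqd.trans ⟨p, by rw [hy]; ring⟩⟩

/-- The prime m-ideals of the bandification of `ℤ` are exactly the sets
`{0} ∪ ⋃_{p ∈ P} pℤ` for sets `P` of prime numbers; in particular they are in
bijection with the subsets of the primes, and the unique maximal one is
`ℤ \ {1, -1}`. -/
theorem prime_m_ideals_of_Z :
    (∀ I : Set ℤ, IsPrimeMIdealInt I ↔
      ∃ P : Set ℕ, (∀ p ∈ P, p.Prime) ∧
        I = {0} ∪ ⋃ p ∈ P, {x : ℤ | (p : ℤ) ∣ x}) ∧
    IsPrimeMIdealInt {x : ℤ | x ≠ 1 ∧ x ≠ -1} ∧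
    (∀ I : Set ℤ, IsPrimeMIdealInt I → I ⊆ {x : ℤ | x ≠ 1 ∧ x ≠ -1}) := by
  refine ⟨fun I => ⟨fun hI => ?_, fun ⟨P, hP, hIeq⟩ => ?_⟩, ?_, ?_⟩
  · -- forward
    refine ⟨{p : ℕ | p.Prime ∧ (p : ℤ) ∈ I}, fun p hp => hp.1, ?_⟩
    ext x
    simp only [Set.mem_union, Set.mem_singleton_iff, Set.mem_iUnion, Set.mem_setOf_eq]
    constructor
    · intro hx
      by_cases hx0 : x = 0
      · exact Or.inl hx0
      · obtain ⟨p, hp, hpI, hpd⟩ := exists_prime_mem hI x.natAbs x rfl hx hx0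
        exact Or.inr ⟨p, ⟨hp, hpI⟩, hpd⟩
    · rintro (rfl | ⟨p, ⟨hp, hpI⟩, c, rfl⟩)
      · exact hI.1
      · simpa [mul_comm] using hI.2.2.1 c (p : ℤ) hpI
  · -- backward
    subst hIeq
    refine ⟨Or.inl rfl, ?_, ?_, ?_, ?_⟩
    · intro h
      have h1 : (1 : ℤ) ∈ ({0} ∪ ⋃ p ∈ P, {x : ℤ | (p : ℤ) ∣ x} : Set ℤ) := h ▸ Set.mem_univ 1
      simp only [Set.mem_union, Set.mem_singleton_iff, Set.mem_iUnion, Set.mem_setOf_eq] at h1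
      rcases h1 with h1 | ⟨p, hp, hpd⟩
      · exact one_ne_zero h1
      · exact (hP p hp).one_lt.ne' (by exact_mod_cast Int.eq_one_of_dvd_one (by positivity) hpd)
    · rintro a b hb
      simp only [Set.mem_union, Set.mem_singleton_iff, Set.mem_iUnion, Set.mem_setOf_eq] at hb ⊢
      rcases hb with rfl | ⟨p, hp, hpd⟩
      · exact Or.inl (mul_zero a)
      · exact Or.inr ⟨p, hp, hpd.mul_left a⟩
    · intro h1
      simp only [Set.mem_union, Set.mem_singleton_iff, Set.mem_iUnion, Set.mem_setOf_eq] at h1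
      rcases h1 with h1 | ⟨p, hp, hpd⟩
      · exact one_ne_zero h1
      · exact (hP p hp).one_lt.ne' (by exact_mod_cast Int.eq_one_of_dvd_one (by positivity) hpd)
    · intro a b ha hb hab
      simp only [Set.mem_union, Set.mem_singleton_iff, Set.mem_iUnion, Set.mem_setOf_eq] at ha hb hab
      rcases hab with hab | ⟨p, hp, hpd⟩
      · rcases mul_eq_zero.mp hab with rfl | rfl
        · exact ha (Or.inl rfl)
        · exact hb (Or.inl rfl)
      · rcases (Int.Prime.dvd_mul' (hP p hp) hpd) with h | h
        · exact ha (Or.inr ⟨p, hp, h⟩)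
        · exact hb (Or.inr ⟨p, hp, h⟩)
  · -- middle: {x | x ≠ 1 ∧ x ≠ -1} is prime m-ideal
    refine ⟨⟨by norm_num, by norm_num⟩, ?_, ?_, ?_, ?_⟩
    · intro h
      have : (1 : ℤ) ∈ {x : ℤ | x ≠ 1 ∧ x ≠ -1} := h ▸ Set.mem_univ 1
      exact this.1 rfl
    · intro a b hb
      constructor
      · intro h
        have : IsUnit b := isUnit_of_mul_isUnit_right (h ▸ isUnit_one)
        rcases Int.isUnit_iff.mp this with rfl | rfl
        · exact hb.1 rfl
        · exact hb.2 rfl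
      · intro h
        have : IsUnit b := isUnit_of_mul_isUnit_right (h ▸ (by norm_num : IsUnit (-1 : ℤ)))
        rcases Int.isUnit_iff.mp this with rfl | rfl
        · exact hb.1 rfl
        · exact hb.2 rfl
    · simp
    · intro a b ha hb
      simp only [Set.mem_setOf_eq, not_and_or, not_not] at ha hb
      rcases ha with rfl | rfl <;> rcases hb with rfl | rfl <;> simp
  · -- maximality
    intro I hI x hx
    refine ⟨fun h => hI.2.2.2.1 (h ▸ hx), fun h => neg_one_not_mem hI (h ▸ hx)⟩
end

section
/- Let k be a field (viewed as a tract via bandification). The prime m-ideals of the free band k[x₁,...,xₙ] (whose underlying monoid consists of terms c·x^e with c ∈ k, e ∈ ℕⁿ) are exactly the ideals of the form ⟨x_j : j ∈ J⟩ = {c·x^e : e_j > 0 for some j ∈ J} ∪ {0} for subsets J ⊆ {1,...,n}; in particular Spec k[x₁,...,xₙ] has exactly 2ⁿ points. -/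
/-- The underlying pointed monoid of the free band `k[x₁,…,xₙ]` over a field
`k`: terms `c·x^e` with `c ∈ k` nonzero (encoded by `kˣ`) and `e ∈ ℕⁿ`,
together with the absorbing element `0`. -/
abbrev FreeBandMonoid (k : Type*) [Field k] (n : ℕ) :=
  WithZero (kˣ × (Fin n → Multiplicative ℕ))

/-- `I` is a prime m-ideal of the commutative pointed monoid `B`. -/
def IsPrimeMIdeal {B : Type*} [CommMonoidWithZero B] (I : Set B) : Prop :=
  (0 : B) ∈ I ∧ I ≠ Set.univ ∧ (∀ a b : B, b ∈ I → a * b ∈ I) ∧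
    (1 : B) ∉ I ∧ ∀ a b : B, a ∉ I → b ∉ I → a * b ∉ I

namespace FBProof

variable {k : Type*} [Field k] {n : ℕ}

/-- The variable `x_j` as an element of the free band monoid. -/
def X (k : Type*) [Field k] {n : ℕ} (j : Fin n) : FreeBandMonoid k n :=
  (((1, Pi.mulSingle j (Multiplicative.ofAdd 1)) : kˣ × (Fin n → Multiplicative ℕ)) :
    FreeBandMonoid k n)

/-- The m-ideal generated by the variables `x_j`, `j ∈ J`. -/
def SJ (k : Type*) [Field k] {n : ℕ} (J : Set (Fin n)) : Set (FreeBandMonoid k n) :=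
  {0} ∪ {x : FreeBandMonoid k n |
    ∃ (c : kˣ) (e : Fin n → Multiplicative ℕ),
      x = ((c, e) : kˣ × (Fin n → Multiplicative ℕ)) ∧
        ∃ j ∈ J, 0 < Multiplicative.toAdd (e j)}

lemma mem_SJ_coe {J : Set (Fin n)} {c : kˣ} {e : Fin n → Multiplicative ℕ} :
    ((((c, e) : kˣ × (Fin n → Multiplicative ℕ))) : FreeBandMonoid k n) ∈ SJ k J ↔
      ∃ j ∈ J, 0 < Multiplicative.toAdd (e j) := by
  constructor
  · rintro (h | ⟨c', e', he, hj⟩)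
    · exact absurd h WithZero.coe_ne_zero
    · rw [WithZero.coe_inj, Prod.mk.injEq] at he
      obtain ⟨rfl, rfl⟩ := he
      exact hj
  · intro hj
    exact Or.inr ⟨c, e, rfl, hj⟩

lemma X_mem_SJ_iff {J : Set (Fin n)} {j : Fin n} : X k j ∈ SJ k J ↔ j ∈ J := by
  rw [X, mem_SJ_coe]
  constructor
  · rintro ⟨j', hj', hpos⟩
    rcases eq_or_ne j' j with rfl | hne
    · exact hj'
    · simp [Pi.mulSingle_apply, hne] at hpos
  · intro hj
    exact ⟨j, hj, by simp⟩

/-- Decomposition: if `e j > 0`, then `c·x^e = (c·x^f) * x_j` for some `f`. -/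
lemma decomp (c : kˣ) (e : Fin n → Multiplicative ℕ) (j : Fin n)
    (hj : 0 < Multiplicative.toAdd (e j)) :
    ∃ f : Fin n → Multiplicative ℕ,
      ((((c, f) : kˣ × (Fin n → Multiplicative ℕ))) : FreeBandMonoid k n) * X k j =
        (((c, e) : kˣ × (Fin n → Multiplicative ℕ)) : FreeBandMonoid k n) ∧
      (∀ i, Multiplicative.toAdd (f i) ≤ Multiplicative.toAdd (e i)) ∧
      Multiplicative.toAdd (f j) < Multiplicative.toAdd (e j) := by
  classical
  refine ⟨fun i => if i = j then Multiplicative.ofAdd (Multiplicative.toAdd (e j) - 1)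
    else e i, ?_, ?_, ?_⟩
  · rw [X, ← WithZero.coe_mul]
    congr 1
    refine Prod.ext (by simp) ?_
    funext i
    rcases eq_or_ne i j with rfl | hne
    · simp only [Pi.mul_apply, Pi.mulSingle_apply, if_pos rfl]
      apply Multiplicative.toAdd.injective
      simp
      omega
    · simp [Pi.mul_apply, Pi.mulSingle_apply, hne]
  · intro i
    rcases eq_or_ne i j with rfl | hne
    · simp
    · simp [hne]
  · simp; omega

/-- If `x_j ∉ I` for all variables occurring in `e`, then `c·x^e ∉ I`. -/
lemma coe_not_mem {I : Set (FreeBandMonoid k n)} (hI : IsPrimeMIdeal I)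
    (c : kˣ) (e : Fin n → Multiplicative ℕ)
    (h : ∀ j, 0 < Multiplicative.toAdd (e j) → X k j ∉ I) :
    ((((c, e) : kˣ × (Fin n → Multiplicative ℕ))) : FreeBandMonoid k n) ∉ I := by
  classical
  obtain ⟨h0, hne, habs, h1, hp⟩ := hI
  suffices H : ∀ N (e : Fin n → Multiplicative ℕ),
      (∑ j, Multiplicative.toAdd (e j)) = N →
      (∀ j, 0 < Multiplicative.toAdd (e j) → X k j ∉ I) →
      ((((c, e) : kˣ × (Fin n → Multiplicative ℕ))) : FreeBandMonoid k n) ∉ I by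
    exact H _ e rfl h
  intro N
  induction N using Nat.strong_induction_on with
  | _ N ih =>
    intro e hsum h
    by_cases hex : ∃ j, 0 < Multiplicative.toAdd (e j)
    · obtain ⟨j, hj⟩ := hex
      obtain ⟨f, hfe, hle, hlt⟩ := decomp c e j hj
      rw [← hfe]
      refine hp _ _ ?_ (h j hj)
      have hsumf : (∑ i, Multiplicative.toAdd (f i)) < N := by
        rw [← hsum]
        exact Finset.sum_lt_sum (fun i _ => hle i) ⟨j, Finset.mem_univ j, hlt⟩
      exact ih _ hsumf f rfl (fun i hi => h i (lt_of_lt_of_le hi (hle i)))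
    · push_neg at hex
      have he1 : e = 1 := by
        funext i
        apply Multiplicative.toAdd.injective
        simpa using Nat.le_zero.mp (hex i)
      subst he1
      intro hmem
      apply h1
      have := habs (((c⁻¹, 1) : kˣ × (Fin n → Multiplicative ℕ)) : FreeBandMonoid k n) _ hmem
      rwa [← WithZero.coe_mul, Prod.mk_mul_mk, inv_mul_cancel, mul_one,
        ← Prod.one_eq_mk, WithZero.coe_one] at this

/-- Every prime m-ideal is of the form `SJ`. -/
lemma eq_SJ {I : Set (FreeBandMonoid k n)} (hI : IsPrimeMIdeal I) :
    I = SJ k {j | X k j ∈ I} := by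
  obtain ⟨h0, hne, habs, h1, hp⟩ := hI
  ext x
  rcases eq_or_ne x 0 with rfl | hx
  · simp [SJ, h0]
  · obtain ⟨⟨c, e⟩, rfl⟩ := WithZero.ne_zero_iff_exists.mp hx
    rw [mem_SJ_coe]
    constructor
    · intro hmem
      by_contra hno
      push_neg at hno
      exact coe_not_mem ⟨h0, hne, habs, h1, hp⟩ c e
        (fun j hj hXj => by have := hno j hXj; simp at this; simp [this] at hj) hmem
    · rintro ⟨j, hj, hpos⟩
      obtain ⟨f, hfe, -, -⟩ := decomp c e j hpos
      rw [← hfe]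
      exact habs _ _ hj

/-- `SJ k J` is a prime m-ideal. -/
lemma isPrime_SJ (J : Set (Fin n)) : IsPrimeMIdeal (SJ k J) := by
  have hone : (1 : FreeBandMonoid k n) ∉ SJ k J := by
    have : (1 : FreeBandMonoid k n) =
        (((1, 1) : kˣ × (Fin n → Multiplicative ℕ)) : FreeBandMonoid k n) := rfl
    rw [this, mem_SJ_coe]
    rintro ⟨j, -, hpos⟩
    simp at hpos
  refine ⟨Or.inl rfl, ?_, ?_, hone, ?_⟩
  · intro h
    exact hone (h ▸ Set.mem_univ 1)
  · intro a b hb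
    rcases eq_or_ne a 0 with rfl | ha
    · exact Or.inl (by simp)
    rcases eq_or_ne b 0 with rfl | hb0
    · exact Or.inl (by simp)
    obtain ⟨⟨ca, ea⟩, rfl⟩ := WithZero.ne_zero_iff_exists.mp ha
    obtain ⟨⟨cb, eb⟩, rfl⟩ := WithZero.ne_zero_iff_exists.mp hb0
    obtain ⟨j, hj, hpos⟩ := mem_SJ_coe.mp hb
    rw [← WithZero.coe_mul, Prod.mk_mul_mk, mem_SJ_coe]
    exact ⟨j, hj, by simp; omega⟩
  · intro a b ha hb hab
    rcases eq_or_ne a 0 with rfl | ha0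
    · exact ha (Or.inl rfl)
    rcases eq_or_ne b 0 with rfl | hb0
    · exact hb (Or.inl rfl)
    obtain ⟨⟨ca, ea⟩, rfl⟩ := WithZero.ne_zero_iff_exists.mp ha0
    obtain ⟨⟨cb, eb⟩, rfl⟩ := WithZero.ne_zero_iff_exists.mp hb0
    rw [← WithZero.coe_mul, Prod.mk_mul_mk, mem_SJ_coe] at hab
    obtain ⟨j, hj, hpos⟩ := hab
    simp only [Pi.mul_apply, toAdd_mul] at hpos
    rcases Nat.eq_zero_or_pos (Multiplicative.toAdd (ea j)) with h | h
    · exact hb (mem_SJ_coe.mpr ⟨j, hj, by omega⟩)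
    · exact ha (mem_SJ_coe.mpr ⟨j, hj, h⟩)

end FBProof

/-- Main theorem. -/
theorem prime_m_ideals_of_free_band (k : Type*) [Field k] (n : ℕ) :
    (∀ I : Set (FreeBandMonoid k n), IsPrimeMIdeal I ↔
      ∃ J : Set (Fin n),
        I = {0} ∪ {x : FreeBandMonoid k n |
          ∃ (c : kˣ) (e : Fin n → Multiplicative ℕ),
            x = ((c, e) : kˣ × (Fin n → Multiplicative ℕ)) ∧
              ∃ j ∈ J, 0 < Multiplicative.toAdd (e j)}) ∧
    Nat.card {I : Set (FreeBandMonoid k n) // IsPrimeMIdeal I} = 2 ^ n := by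
  have key : ∀ I : Set (FreeBandMonoid k n), IsPrimeMIdeal I ↔
      ∃ J : Set (Fin n), I = FBProof.SJ k J := by
    intro I
    constructor
    · intro hI
      exact ⟨_, FBProof.eq_SJ hI⟩
    · rintro ⟨J, rfl⟩
      exact FBProof.isPrime_SJ J
  refine ⟨fun I => key I, ?_⟩
  have e : Set (Fin n) ≃ {I : Set (FreeBandMonoid k n) // IsPrimeMIdeal I} :=
    { toFun := fun J => ⟨FBProof.SJ k J, (key _).mpr ⟨J, rfl⟩⟩
      invFun := fun I => {j | FBProof.X k j ∈ I.1}
      left_inv := fun J => by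
        ext j
        exact FBProof.X_mem_SJ_iff
      right_inv := fun I => Subtype.ext (FBProof.eq_SJ I.2).symm }
  rw [← Nat.card_congr e]
  simp [Nat.card_eq_fintype_card]
end

section
/- The bandification functor from commutative rings to bands is fully faithful: for commutative rings R and S, a map f : R → S is a ring homomorphism if and only if f is a homomorphism of multiplicative monoids with f(0) = 0, f(1) = 1, and for every finite family (aᵢ) in R with Σ aᵢ = 0 one has Σ f(aᵢ) = 0 in S. -/
/-- The bandification functor on commutative rings is fully faithful:
`f : R → S` is a ring homomorphism iff it is a morphism of multiplicative
monoids preserving `0` and `1` which sends null-sums to null-sums, i.e.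
`Σ aᵢ = 0` implies `Σ f(aᵢ) = 0`. -/
theorem ringHom_iff_band_morphism
    {R S : Type*} [CommRing R] [CommRing S] (f : R → S) :
    ((∀ x y, f (x + y) = f x + f y) ∧ (∀ x y, f (x * y) = f x * f y) ∧
      f 1 = 1) ↔
    (f 0 = 0 ∧ f 1 = 1 ∧ (∀ x y, f (x * y) = f x * f y) ∧
      ∀ s : Multiset R, s.sum = 0 → (s.map f).sum = 0) := by
  constructor
  · rintro ⟨hadd, hmul, h1⟩
    have h0 : f 0 = 0 := by
      have := hadd 0 0
      simp only [add_zero] at this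
      linear_combination -this
    refine ⟨h0, h1, hmul, ?_⟩
    intro s hs
    have : ∀ s : Multiset R, (s.map f).sum = f s.sum := by
      intro s
      induction s using Multiset.induction with
      | empty => simp [h0]
      | cons a t ih => simp [hadd, ih]
    rw [this, hs, h0]
  · rintro ⟨h0, h1, hmul, hnull⟩
    have hneg : ∀ x, f (-x) = - f x := by
      intro x
      have := hnull {x, -x} (by simp)
      simp at this
      linear_combination this
    have hadd : ∀ x y, f (x + y) = f x + f y := by
      intro x y
      have := hnull {x, y, -(x+y)} (by simp)
      simp at this
      rw [show (-y + -x) = -(x+y) by ring, hneg] at this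
      linear_combination -this
    exact ⟨hadd, hmul, h1⟩
end
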